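/- arXiv:2207.13933 — 8 statements merged into one kernel-verified Lean document; each statement's English description precedes it below -/
import Mathlib

section
/- Let n be a natural number, r : Fin n → ℂ, and W a multivariate polynomial over ℂ in n variables such that every exponent vector d in the support of W satisfies ∑_i d(i)·r(i) = 2. If a point φ ∈ ℂ^n satisfies (∂W/∂X_i)(φ) = 0 for all i, then W(φ) = 0. (Any SUSY vacuum of an R-symmetric superpotential has vanishing superpotential.) -/
open MvPolynomial

lemma aux_mono {n : ℕ} (φ : Fin n → ℂ) (i : Fin n) (d : Fin n →₀ ℕ) (c : ℂ) :
    φ i * eval φ (pderiv i (monomial d c)) = (d i : ℂ) * eval φ (monomial d c) := by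
  rw [pderiv_monomial, eval_monomial, eval_monomial]
  rcases Nat.eq_zero_or_pos (d i) with h | h
  · simp [h]
  · have hprod : ∀ (e : Fin n →₀ ℕ), e.prod (fun j k => φ j ^ k) = ∏ j, φ j ^ e j := by
      intro e
      exact Finsupp.prod_fintype _ _ (fun j => pow_zero _)
    rw [hprod, hprod]
    have heq : (∏ j, φ j ^ (((d - Finsupp.single i 1) : Fin n →₀ ℕ) j))
        = (∏ j ∈ Finset.univ.erase i, φ j ^ d j) * φ i ^ (d i - 1) := by
      rw [← Finset.prod_erase_mul _ _ (Finset.mem_univ i)]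
      congr 1
      · apply Finset.prod_congr rfl
        intro j hj
        rw [Finsupp.tsub_apply, Finsupp.single_apply, if_neg (Ne.symm (Finset.mem_erase.mp hj).1)]
        simp
      · rw [Finsupp.tsub_apply, Finsupp.single_apply, if_pos rfl]
    rw [heq, ← Finset.prod_erase_mul _ _ (Finset.mem_univ i)]
    have hpow : φ i ^ (d i - 1) * φ i = φ i ^ d i := by
      rw [← pow_succ]
      congr 1
      omega
    calc φ i * ((RingHom.id ℂ) (c * ↑(d i)) * ((∏ j ∈ Finset.univ.erase i, φ j ^ d j) * φ i ^ (d i - 1)))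
        = (↑(d i) : ℂ) * ((RingHom.id ℂ) c * ((∏ j ∈ Finset.univ.erase i, φ j ^ d j) * (φ i ^ (d i - 1) * φ i))) := by
          simp; ring
      _ = _ := by rw [hpow]; simp

/-- Any SUSY vacuum of an R-symmetric superpotential has vanishing superpotential. -/
theorem susy_vacuum_W_eq_zero (n : ℕ) (r : Fin n → ℂ) (W : MvPolynomial (Fin n) ℂ)
    (hR : ∀ d ∈ W.support, ∑ i, (d i : ℂ) * r i = 2)
    (φ : Fin n → ℂ) (hφ : ∀ i, eval φ (pderiv i W) = 0) :
    eval φ W = 0 := by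
  have expand : ∀ i, φ i * eval φ (pderiv i W)
      = ∑ d ∈ W.support, (d i : ℂ) * eval φ (monomial d (coeff d W)) := by
    intro i
    conv_lhs => rw [W.as_sum]
    rw [map_sum, map_sum, Finset.mul_sum]
    exact Finset.sum_congr rfl fun d _ => aux_mono φ i d _
  have key : (0 : ℂ) = 2 * eval φ W := by
    calc (0 : ℂ) = ∑ i, r i * (φ i * eval φ (pderiv i W)) := by simp [hφ]
      _ = ∑ i, ∑ d ∈ W.support, r i * ((d i : ℂ) * eval φ (monomial d (coeff d W))) := by
          simp only [expand, Finset.mul_sum]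
      _ = ∑ d ∈ W.support, ∑ i, r i * ((d i : ℂ) * eval φ (monomial d (coeff d W))) :=
          Finset.sum_comm
      _ = ∑ d ∈ W.support, 2 * eval φ (monomial d (coeff d W)) := by
          refine Finset.sum_congr rfl fun d hd => ?_
          rw [← hR d hd, Finset.sum_mul]
          exact Finset.sum_congr rfl fun i _ => by ring
      _ = 2 * eval φ W := by
          rw [← Finset.mul_sum]
          congr 1
          conv_rhs => rw [W.as_sum]
          rw [map_sum]
  have h2 : (2 : ℂ) ≠ 0 := two_ne_zero
  exact (mul_eq_zero.mp key.symm).resolve_left h2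
end

section
/- Let n be a natural number, r : Fin n → ℝ, and W a multivariate polynomial over ℂ in n variables such that every exponent vector d in the support of W satisfies ∑_i d(i)·r(i) = 2. Then for every point φ ∈ ℂ^n, |W(φ)| ≤ (1/2)·√(∑_i r(i)²·|φ_i|²)·√(∑_i |(∂W/∂X_i)(φ)|²). (The superpotential is bounded by half the product of the R-axion decay constant f_a = √(∑ r_i²|φ_i|²) and the Goldstino decay constant f = √(∑ |∂_i W|²).) -/
/-!
Weighted homogeneity of `W` of degree `2` gives Euler's identity
`∑ i, r i * φ i * ∂ᵢW(φ) = 2 * W(φ)`; the triangle and Cauchy–Schwarz inequalities applied to its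
left-hand side give the bound.
-/

open MvPolynomial

theorem norm_sum_mul_le_sqrt_mul_sqrt {ι 𝕜 : Type*} [SeminormedRing 𝕜] (s : Finset ι)
    (a b : ι → 𝕜) :
    ‖∑ i ∈ s, a i * b i‖ ≤ √(∑ i ∈ s, ‖a i‖ ^ 2) * √(∑ i ∈ s, ‖b i‖ ^ 2) :=
  calc ‖∑ i ∈ s, a i * b i‖ ≤ ∑ i ∈ s, ‖a i‖ * ‖b i‖ :=
        (norm_sum_le _ _).trans (Finset.sum_le_sum fun _ _ => norm_mul_le _ _)
    _ ≤ _ := Real.sum_mul_le_sqrt_mul_sqrt _ _ _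

namespace MvPolynomial

variable {σ R : Type*} [Fintype σ] [CommSemiring R]

theorem IsWeightedHomogeneous.sum_smul_X_mul_pderiv {w : σ → R} {m : R}
    {p : MvPolynomial σ R} (h : p.IsWeightedHomogeneous w m) :
    ∑ i, w i • (X i * pderiv i p) = m • p := by
  conv_lhs => rw [p.as_sum]
  conv_rhs => rw [p.as_sum, Finset.smul_sum]
  simp_rw [map_sum, Finset.mul_sum, Finset.smul_sum]
  rw [Finset.sum_comm]
  refine Finset.sum_congr rfl fun d hd => ?_
  have hweight : ∑ i, (d i : R) * w i = m := by
    simp only [← h (mem_support_iff.mp hd), Finsupp.weight_eq_sum, nsmul_eq_mul]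
  simp_rw [X_mul_pderiv_monomial, ← Nat.cast_smul_eq_nsmul R, smul_smul, ← Finset.sum_smul,
    mul_comm (w _), hweight]

end MvPolynomial

/-- Bound on the superpotential: `|W(φ)| ≤ (1/2) f_a f`, where `f_a` is the R-axion decay
constant and `f` is the Goldstino decay constant. -/
theorem superpotential_bound (n : ℕ) (r : Fin n → ℝ) (W : MvPolynomial (Fin n) ℂ)
    (hR : ∀ d ∈ W.support, ∑ i, (d i : ℂ) * (r i : ℂ) = 2)
    (φ : Fin n → ℂ) :
    ‖eval φ W‖ ≤
      (1 / 2) * Real.sqrt (∑ i, (r i) ^ 2 * ‖φ i‖ ^ 2) *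
        Real.sqrt (∑ i, ‖eval φ (pderiv i W)‖ ^ 2) := by
  have hW : W.IsWeightedHomogeneous (fun i => (r i : ℂ)) 2 := fun d hd => by
    simpa only [Finsupp.weight_eq_sum, nsmul_eq_mul] using hR d (mem_support_iff.mpr hd)
  have euler : ∑ i, (r i * φ i) * eval φ (pderiv i W) = 2 * eval φ W := by
    simpa only [map_sum, smul_eval, eval_mul, eval_X, mul_assoc] using
      congrArg (eval φ) hW.sum_smul_X_mul_pderiv
  have hnorm : ∀ i, ‖(r i : ℂ) * φ i‖ ^ 2 = r i ^ 2 * ‖φ i‖ ^ 2 := fun i => by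
    rw [norm_mul, Complex.norm_real, mul_pow, Real.norm_eq_abs, sq_abs]
  calc ‖eval φ W‖ = 1 / 2 * ‖∑ i, (r i * φ i) * eval φ (pderiv i W)‖ := by
        rw [euler, norm_mul, Complex.norm_ofNat]; ring
    _ ≤ 1 / 2 * (√(∑ i, ‖(r i : ℂ) * φ i‖ ^ 2) * √(∑ i, ‖eval φ (pderiv i W)‖ ^ 2)) := by
        gcongr; exact norm_sum_mul_le_sqrt_mul_sqrt _ _ _
    _ = _ := by simp only [hnorm, mul_assoc]
end

section
/- Let f, h ∈ ℂ with f ≠ 0 and h ≠ 0, and define V : ℂ² → ℝ by V(X, φ) = |f + h·X·φ|² + (1/4)·|h|²·|X|⁴. Then V(X, φ) > 0 for all (X, φ) ∈ ℂ², yet the infimum of V over ℂ² equals 0; in particular the infimum is not attained. (The Witten runaway model has a SUSY runaway direction: along φ = −f/(hX) with X → 0, V → 0.) -/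
/-!
The two terms of `V` are nonnegative and cannot vanish together: `‖X‖⁴` vanishes only at
`X = 0`, where the first term is `‖f‖² > 0`. On the other hand, along the runaway path
`X = t`, `φ = -f / (h t)` the first term vanishes identically, so `V = ‖h‖² t⁴ / 4 → 0`
as `t → 0`.
-/

open Filter Topology

namespace WittenRunaway

noncomputable def potential (f h : ℂ) (p : ℂ × ℂ) : ℝ :=
  ‖f + h * p.1 * p.2‖ ^ 2 + (1 / 4) * ‖h‖ ^ 2 * ‖p.1‖ ^ 4

theorem potential_pos {f h : ℂ} (hf : f ≠ 0) (hh : h ≠ 0) (p : ℂ × ℂ) :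
    0 < potential f h p := by
  unfold potential
  rcases eq_or_ne p.1 0 with hX | hX
  · rw [hX, mul_zero, zero_mul, add_zero]
    exact add_pos_of_pos_of_nonneg (pow_pos (norm_pos_iff.2 hf) 2) (by positivity)
  · exact add_pos_of_nonneg_of_pos (by positivity) (by positivity)

noncomputable def runawayPath (f h : ℂ) (t : ℝ) : ℂ × ℂ :=
  ((t : ℂ), -f / (h * t))

theorem potential_runawayPath {f h : ℂ} (hh : h ≠ 0) {t : ℝ} (ht : t ≠ 0) :
    potential f h (runawayPath f h t) = ‖h‖ ^ 2 * t ^ 4 / 4 := by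
  have hF : f + h * t * (-f / (h * t)) = 0 := by
    have : (t : ℂ) ≠ 0 := by exact_mod_cast ht
    field_simp
    ring
  simp only [potential, runawayPath, hF, norm_zero, Complex.norm_real, Real.norm_eq_abs,
    pow_abs]
  rw [abs_of_nonneg (by positivity)]
  ring

theorem tendsto_potential_runawayPath (f : ℂ) {h : ℂ} (hh : h ≠ 0) :
    Tendsto (potential f h ∘ runawayPath f h) (𝓝[≠] 0) (𝓝 0) := by
  have hlim : Tendsto (fun t : ℝ ↦ ‖h‖ ^ 2 * t ^ 4 / 4) (𝓝 0) (𝓝 0) := by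
    simpa using ((continuous_const.mul (continuous_pow 4)).div_const 4).tendsto (0 : ℝ)
  refine (hlim.mono_left nhdsWithin_le_nhds).congr' ?_
  filter_upwards [self_mem_nhdsWithin] with t ht
  exact (potential_runawayPath hh ht).symm

end WittenRunaway

open WittenRunaway in
/-- The Witten runaway model: the scalar potential is everywhere positive, its infimum is
`0`, and in particular the infimum is not attained. -/
theorem witten_runaway_potential (f h : ℂ) (hf : f ≠ 0) (hh : h ≠ 0)
    (V : ℂ × ℂ → ℝ)
    (hV : ∀ p, V p = ‖f + h * p.1 * p.2‖ ^ 2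
      + (1 / 4) * ‖h‖ ^ 2 * ‖p.1‖ ^ 4) :
    (∀ p, 0 < V p) ∧ IsGLB (Set.range V) 0 ∧ 0 ∉ Set.range V := by
  obtain rfl : V = potential f h := funext hV
  refine ⟨potential_pos hf hh, ?_, fun ⟨p, hp⟩ ↦ (potential_pos hf hh p).ne' hp⟩
  exact IsGLB.range_of_tendsto (fun p ↦ (potential_pos hf hh p).le)
    (tendsto_map'_iff.2 (tendsto_potential_runawayPath f hh))
end

section
/- Let f, m, h ∈ ℂ with |m|² ≥ |f|·|h|. Then for all (X₁, X₂, φ) ∈ ℂ³, |f + (1/2)·h·φ²|² + |m·φ|² + |m·X₂ + h·X₁·φ|² ≥ |f|², and equality holds at every point with φ = 0 and X₂ = 0 (X₁ arbitrary). (In the O'Raifeartaigh model with |m|² ≥ |fh|, the global minimum of the scalar potential is the SUSY breaking value |f|², attained on the flat direction X₂ = φ = 0.) -/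
/-! The triangle inequality `‖f‖ ≤ ‖f + hφ²/2‖ + ‖hφ²/2‖` costs at most `‖f‖‖h‖‖φ‖²` in the
squared F-term of `φ`, and when `‖m‖² ≥ ‖f‖‖h‖` the mass term `‖mφ‖²` pays for exactly that. -/

theorem sq_norm_le_sq_norm_add_add_two_mul_norm_mul_norm {E : Type*}
    [SeminormedAddCommGroup E] (a b : E) :
    ‖a‖ ^ 2 ≤ ‖a + b‖ ^ 2 + 2 * ‖a‖ * ‖b‖ := by
  have htri : ‖a‖ ≤ ‖a + b‖ + ‖b‖ := by
    simpa using norm_sub_le (a + b) b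
  rcases le_total ‖a‖ ‖a + b‖ with hle | hlt
  · nlinarith [norm_nonneg a, norm_nonneg b]
  · -- `‖a‖² - ‖a + b‖² = (‖a‖ - ‖a + b‖)(‖a‖ + ‖a + b‖) ≤ ‖b‖ · 2‖a‖`
    nlinarith [norm_nonneg b, norm_nonneg (a + b)]

/-- In the O'Raifeartaigh model with `|m|² ≥ |f||h|`, the scalar potential is bounded below
by the SUSY breaking value `|f|²`, attained on the flat direction `X₂ = φ = 0`. -/
theorem oraifeartaigh_global_min (f m h : ℂ)
    (hm : ‖m‖ ^ 2 ≥ ‖f‖ * ‖h‖) :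
    (∀ X₁ X₂ φ : ℂ,
      ‖f + (1 / 2) * h * φ ^ 2‖ ^ 2 + ‖m * φ‖ ^ 2
        + ‖m * X₂ + h * X₁ * φ‖ ^ 2 ≥ ‖f‖ ^ 2) ∧
    (∀ X₁ : ℂ,
      ‖f + (1 / 2) * h * (0 : ℂ) ^ 2‖ ^ 2 + ‖m * (0 : ℂ)‖ ^ 2
        + ‖m * (0 : ℂ) + h * X₁ * (0 : ℂ)‖ ^ 2 = ‖f‖ ^ 2) := by
  refine ⟨fun X₁ X₂ φ => ?_, fun X₁ => by simp⟩
  have hmass : 2 * ‖f‖ * ‖(1 / 2) * h * φ ^ 2‖ ≤ ‖m * φ‖ ^ 2 := by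
    have hφ : 0 ≤ ‖φ‖ ^ 2 := sq_nonneg _
    calc 2 * ‖f‖ * ‖(1 / 2) * h * φ ^ 2‖ = ‖f‖ * ‖h‖ * ‖φ‖ ^ 2 := by
          simp only [norm_mul, norm_pow, norm_div, norm_one, Complex.norm_ofNat]; ring
      _ ≤ ‖m‖ ^ 2 * ‖φ‖ ^ 2 := mul_le_mul_of_nonneg_right hm hφ
      _ = ‖m * φ‖ ^ 2 := by rw [norm_mul, mul_pow]
  have hF := sq_norm_le_sq_norm_add_add_two_mul_norm_mul_norm f ((1 / 2) * h * φ ^ 2)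
  linarith [sq_nonneg ‖m * X₂ + h * X₁ * φ‖]
end

section
/- Let a, b, c, d ∈ ℂ all be nonzero, and define V : ℂ⁴ → ℝ by V(φ₁, φ₂, φ₃, φ₄) = |a + c·φ₂·φ₃|² + |2b·φ₂ + c·φ₁·φ₃|² + |c·φ₁·φ₂ + d·φ₄|² + |d·φ₃|². Then V > 0 everywhere on ℂ⁴, yet the infimum of V over ℂ⁴ equals 0; in particular the infimum is not attained. (The metastable SUSY breaking model has a SUSY runaway direction: along φ₁ = 2ab/(c²φ₃²), φ₂ = −a/(cφ₃), φ₄ = 2a²b/(c²dφ₃³) with φ₃ → 0, V = |dφ₃|² → 0.) -/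
/-!
Positivity: if `φ₃ = 0` the first F-term equals `a ≠ 0`, and otherwise the last one, `d φ₃`, is
nonzero. Runaway: for `φ₃ = t ≠ 0` the choice `φ₂ = -a/(ct)`, `φ₁ = 2ab/(c²t²)`,
`φ₄ = 2a²b/(c²dt³)` solves the first three F-term equations in turn, leaving `V = ‖d t‖²`,
which tends to `0` as `t → 0`.
-/

open Filter Topology Set

theorem isGLB_range_of_tendsto {α ι : Type*} {f : α → ℝ} {a : ℝ} {l : Filter ι} [l.NeBot]
    {γ : ι → α} (hf : ∀ p, a ≤ f p) (hγ : Tendsto (f ∘ γ) l (𝓝 a)) :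
    IsGLB (range f) a :=
  isGLB_of_mem_closure (by rintro _ ⟨p, rfl⟩; exact hf p)
    (mem_closure_of_tendsto hγ (Eventually.of_forall fun _ => mem_range_self _))

/-- The F-term potential `∑ |∂ᵢW|²` of `W = aφ₁ + bφ₂² + cφ₁φ₂φ₃ + dφ₃φ₄`. -/
noncomputable def metastablePotential (a b c d : ℂ) (φ : ℂ × ℂ × ℂ × ℂ) : ℝ :=
  ‖a + c * φ.2.1 * φ.2.2.1‖ ^ 2
    + ‖2 * b * φ.2.1 + c * φ.1 * φ.2.2.1‖ ^ 2
    + ‖c * φ.1 * φ.2.1 + d * φ.2.2.2‖ ^ 2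
    + ‖d * φ.2.2.1‖ ^ 2

noncomputable def metastableRunaway (a b c d t : ℂ) : ℂ × ℂ × ℂ × ℂ :=
  (2 * a * b / (c ^ 2 * t ^ 2), -a / (c * t), t, 2 * a ^ 2 * b / (c ^ 2 * d * t ^ 3))

section

variable {a b c d : ℂ}

theorem metastablePotential_pos (ha : a ≠ 0) (hd : d ≠ 0) (φ : ℂ × ℂ × ℂ × ℂ) :
    0 < metastablePotential a b c d φ := by
  unfold metastablePotential
  rcases eq_or_ne φ.2.2.1 0 with h₃ | h₃
  · have : 0 < ‖a + c * φ.2.1 * φ.2.2.1‖ ^ 2 := by simp [h₃, ha]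
    positivity
  · have : 0 < ‖d * φ.2.2.1‖ ^ 2 := by simp [hd, h₃]
    positivity

theorem metastablePotential_runaway (hc : c ≠ 0) (hd : d ≠ 0) {t : ℂ} (ht : t ≠ 0) :
    metastablePotential a b c d (metastableRunaway a b c d t) = ‖d * t‖ ^ 2 := by
  have F₁ : a + c * (-a / (c * t)) * t = 0 := by field_simp; ring
  have F₂ : 2 * b * (-a / (c * t)) + c * (2 * a * b / (c ^ 2 * t ^ 2)) * t = 0 := by
    field_simp; ring
  have F₃ : c * (2 * a * b / (c ^ 2 * t ^ 2)) * (-a / (c * t))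
      + d * (2 * a ^ 2 * b / (c ^ 2 * d * t ^ 3)) = 0 := by
    field_simp; ring
  simp [metastablePotential, metastableRunaway, F₁, F₂, F₃]

theorem tendsto_metastablePotential_runaway (hc : c ≠ 0) (hd : d ≠ 0) :
    Tendsto (metastablePotential a b c d ∘ metastableRunaway a b c d) (𝓝[≠] 0) (𝓝 0) := by
  have h : Tendsto (fun t : ℂ => ‖d * t‖ ^ 2) (𝓝[≠] 0) (𝓝 0) := by
    have hcont : Continuous fun t : ℂ => ‖d * t‖ ^ 2 := by fun_prop
    simpa using (hcont.tendsto 0).mono_left nhdsWithin_le_nhds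
  refine h.congr' ?_
  filter_upwards [self_mem_nhdsWithin] with t ht
  exact (metastablePotential_runaway hc hd ht).symm

end

theorem metastable_model_runaway_general (a b c d : ℂ)
    (ha : a ≠ 0) (hc : c ≠ 0) (hd : d ≠ 0)
    (V : ℂ × ℂ × ℂ × ℂ → ℝ)
    (hV : ∀ p, V p = ‖a + c * p.2.1 * p.2.2.1‖ ^ 2
      + ‖2 * b * p.2.1 + c * p.1 * p.2.2.1‖ ^ 2
      + ‖c * p.1 * p.2.1 + d * p.2.2.2‖ ^ 2
      + ‖d * p.2.2.1‖ ^ 2) :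
    (∀ p, 0 < V p) ∧ IsGLB (Set.range V) 0 ∧ 0 ∉ Set.range V := by
  obtain rfl : V = metastablePotential a b c d := funext hV
  have hpos := metastablePotential_pos (b := b) (c := c) ha hd
  refine ⟨hpos, isGLB_range_of_tendsto (fun p => (hpos p).le)
    (tendsto_metastablePotential_runaway hc hd), ?_⟩
  rintro ⟨p, hp⟩
  exact (hpos p).ne' hp

/-- The metastable SUSY breaking model: the scalar potential is everywhere positive, its
infimum is `0`, and in particular the infimum is not attained (a SUSY runaway direction). -/
theorem metastable_model_runaway (a b c d : ℂ)
    (ha : a ≠ 0) (hb : b ≠ 0) (hc : c ≠ 0) (hd : d ≠ 0)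
    (V : ℂ × ℂ × ℂ × ℂ → ℝ)
    (hV : ∀ p, V p = ‖a + c * p.2.1 * p.2.2.1‖ ^ 2
      + ‖2 * b * p.2.1 + c * p.1 * p.2.2.1‖ ^ 2
      + ‖c * p.1 * p.2.1 + d * p.2.2.2‖ ^ 2
      + ‖d * p.2.2.1‖ ^ 2) :
    (∀ p, 0 < V p) ∧ IsGLB (Set.range V) 0 ∧ 0 ∉ Set.range V :=
  metastable_model_runaway_general a b c d ha hc hd V hV
end

section
/- Let a, b, c, d ∈ ℂ all be nonzero. The set of solutions (φ₁, φ₂, φ₃, φ₄) ∈ ℂ⁴ of the four SUSY equations a + 2b·φ₁·φ₂ + d·φ₃·φ₄ = 0, b·φ₁² + 2c·φ₂·φ₃ = 0, c·φ₂² + d·φ₁·φ₄ = 0, d·φ₁·φ₃ = 0 is exactly {(0, 0, φ₃, φ₄) : d·φ₃·φ₄ = −a}. At every such solution, W = aφ₁ + bφ₁²φ₂ + cφ₂²φ₃ + dφ₁φ₃φ₄ vanishes and φ₃ ≠ 0. (The simplest counterexample to the Nelson-Seiberg theorem has N₂ = 1 > N₀ = 0 yet possesses SUSY vacua; these vacua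 have W = 0 and spontaneously break the R-symmetry since the R-charge 6 field φ₃ has a nonzero expectation value.) -/
private lemma key (a b c d x y z w : ℂ)
    (ha : a ≠ 0) (hb : b ≠ 0) (hc : c ≠ 0) (hd : d ≠ 0)
    (h1 : a + 2 * b * x * y + d * z * w = 0)
    (h2 : b * x ^ 2 + 2 * c * y * z = 0)
    (h4 : d * x * z = 0) :
    x = 0 ∧ y = 0 ∧ d * z * w = -a ∧ z ≠ 0 := by
  have hz : z ≠ 0 := by
    intro hz
    subst hz
    have hx : x = 0 := by
      have := h2
      simp only [mul_zero, add_zero] at this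
      rcases mul_eq_zero.1 this with h | h
      · exact absurd h hb
      · exact pow_eq_zero_iff (n := 2) (by norm_num) |>.1 h
    subst hx
    simp at h1
    tauto
  have hx : x = 0 := by
    rcases mul_eq_zero.1 h4 with h | h
    · rcases mul_eq_zero.1 h with h | h
      · exact absurd h hd
      · exact h
    · exact absurd h hz
  subst hx
  have hy : y = 0 := by
    have h2' : (2 * c * y) * z = 0 := by linear_combination h2
    rcases mul_eq_zero.1 h2' with h | h
    · rcases mul_eq_zero.1 h with h | h
      · rcases mul_eq_zero.1 h with h | h
        · norm_num at h
        · exact absurd h hc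
      · exact h
    · exact absurd h hz
  subst hy
  refine ⟨rfl, rfl, ?_, hz⟩
  linear_combination h1

/-- The simplest counterexample to the Nelson-Seiberg theorem, `W = aφ₁ + bφ₁²φ₂ + cφ₂²φ₃
+ dφ₁φ₃φ₄`: the SUSY vacua are exactly `φ₁ = φ₂ = 0`, `dφ₃φ₄ = −a`; at each of them `W`
vanishes and the R-charge 6 field `φ₃` is nonzero (the R-symmetry is broken). -/
theorem simplest_counterexample_vacua (a b c d : ℂ)
    (ha : a ≠ 0) (hb : b ≠ 0) (hc : c ≠ 0) (hd : d ≠ 0) :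
    {p : ℂ × ℂ × ℂ × ℂ |
        a + 2 * b * p.1 * p.2.1 + d * p.2.2.1 * p.2.2.2 = 0 ∧
        b * p.1 ^ 2 + 2 * c * p.2.1 * p.2.2.1 = 0 ∧
        c * p.2.1 ^ 2 + d * p.1 * p.2.2.2 = 0 ∧
        d * p.1 * p.2.2.1 = 0}
      = {p : ℂ × ℂ × ℂ × ℂ | p.1 = 0 ∧ p.2.1 = 0 ∧ d * p.2.2.1 * p.2.2.2 = -a} ∧
    ∀ p : ℂ × ℂ × ℂ × ℂ,
      (a + 2 * b * p.1 * p.2.1 + d * p.2.2.1 * p.2.2.2 = 0 ∧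
        b * p.1 ^ 2 + 2 * c * p.2.1 * p.2.2.1 = 0 ∧
        c * p.2.1 ^ 2 + d * p.1 * p.2.2.2 = 0 ∧
        d * p.1 * p.2.2.1 = 0) →
      (a * p.1 + b * p.1 ^ 2 * p.2.1 + c * p.2.1 ^ 2 * p.2.2.1
          + d * p.1 * p.2.2.1 * p.2.2.2 = 0 ∧ p.2.2.1 ≠ 0) := by
  constructor
  · ext ⟨x, y, z, w⟩
    simp only [Set.mem_setOf_eq]
    constructor
    · rintro ⟨h1, h2, h3, h4⟩
      obtain ⟨hx, hy, h, _⟩ := key a b c d x y z w ha hb hc hd h1 h2 h4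
      exact ⟨hx, hy, h⟩
    · rintro ⟨hx, hy, h⟩
      subst hx; subst hy
      refine ⟨by linear_combination h, by ring, by ring, by ring⟩
  · rintro ⟨x, y, z, w⟩ ⟨h1, h2, h3, h4⟩
    obtain ⟨hx, hy, h, hz⟩ := key a b c d x y z w ha hb hc hd h1 h2 h4
    subst hx; subst hy
    exact ⟨by ring, hz⟩
end

section
/- Let a, b, c ∈ ℂ all be nonzero. The set of solutions (φ₁, φ₂, φ₃) ∈ ℂ³ of the three SUSY equations a + 3b·φ₁²·φ₃ + c·φ₂·φ₃ = 0, c·φ₁·φ₃ = 0, b·φ₁³ + c·φ₁·φ₂ = 0 is exactly {(0, φ₂, φ₃) : c·φ₂·φ₃ = −a}. At every such solution, W = aφ₁ + bφ₁³φ₃ + cφ₁φ₂φ₃ vanishes. (The non-renormalizable quartic model with R-charges {2, 4, −4} and N₂ = 1 > N₀ = 0 is a three-field counterexample to the Nelson-Seiberg theorem: it has SUSY vacua with W = 0.) -/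
/-- The non-renormalizable quartic counterexample `W = aφ₁ + bφ₁³φ₃ + cφ₁φ₂φ₃`: the SUSY
vacua are exactly `φ₁ = 0`, `cφ₂φ₃ = −a`, and `W` vanishes at each of them. -/
theorem quartic_counterexample_vacua (a b c : ℂ) (ha : a ≠ 0) (hb : b ≠ 0) (hc : c ≠ 0) :
    {p : ℂ × ℂ × ℂ |
        a + 3 * b * p.1 ^ 2 * p.2.2 + c * p.2.1 * p.2.2 = 0 ∧
        c * p.1 * p.2.2 = 0 ∧
        b * p.1 ^ 3 + c * p.1 * p.2.1 = 0}
      = {p : ℂ × ℂ × ℂ | p.1 = 0 ∧ c * p.2.1 * p.2.2 = -a} ∧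
    ∀ p : ℂ × ℂ × ℂ,
      (a + 3 * b * p.1 ^ 2 * p.2.2 + c * p.2.1 * p.2.2 = 0 ∧
        c * p.1 * p.2.2 = 0 ∧
        b * p.1 ^ 3 + c * p.1 * p.2.1 = 0) →
      a * p.1 + b * p.1 ^ 3 * p.2.2 + c * p.1 * p.2.1 * p.2.2 = 0 := by
  have key : ∀ p : ℂ × ℂ × ℂ,
      (a + 3 * b * p.1 ^ 2 * p.2.2 + c * p.2.1 * p.2.2 = 0 ∧
        c * p.1 * p.2.2 = 0 ∧
        b * p.1 ^ 3 + c * p.1 * p.2.1 = 0) → p.1 = 0 := by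
    rintro ⟨x, y, z⟩ ⟨h1, h2, h3⟩
    simp only at h1 h2 h3 ⊢
    rcases mul_eq_zero.mp h2 with h | hz
    · rcases mul_eq_zero.mp h with h | hx
      · exact absurd h hc
      · exact hx
    · rw [hz] at h1; simp at h1; exact absurd h1 ha
  constructor
  · ext ⟨x, y, z⟩
    simp only [Set.mem_setOf_eq]
    constructor
    · intro h
      have hx := key (x, y, z) h
      subst hx
      obtain ⟨h1, _, _⟩ := h
      constructor
      · rfl
      · linear_combination h1
    · rintro ⟨hx, h⟩
      subst hx
      refine ⟨by linear_combination h, by ring, by ring⟩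
  · intro p hp
    have hx := key p hp
    rw [hx]; ring
end

section
/- Let p_α : ℂ^n → ℂ for α = 1, …, m be differentiable functions, and define W(c, φ) = ∑_α c_α·p_α(φ) for coefficients c ∈ ℂ^m. Suppose φ* : ℂ^m → ℂ^n is a differentiable family of points such that for every c ∈ ℂ^m: W(c, φ*(c)) = 0 and ∂W/∂φ_i (c, φ*(c)) = 0 for all i = 1, …, n. Then for every c ∈ ℂ^m and every α, p_α(φ*(c)) = 0. (If a SUSY vacuum with vanishing superpotential persists under arbitrary perturbations of the generic coefficients, then every term of the superpotential vanishes individually at the vacuum.) -/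
/-!
Along the vacuum family, `c ↦ W(c, φ*(c))` vanishes identically, so its derivative in the
direction `e_β` vanishes. By the chain rule that derivative is `p_β(φ*(c))` plus
`∂_φ W(c, φ*(c))` applied to `∂_β φ*(c)`, and the latter term is zero because `φ*(c)` is a
critical point of `W(c, ·)`.
-/

open ContinuousLinearMap

section
variable {𝕜 : Type*} [NontriviallyNormedField 𝕜] {ι : Type*} [Fintype ι]
  {E : Type*} [NormedAddCommGroup E] [NormedSpace 𝕜 E]

theorem ContinuousLinearMap.eq_zero_of_apply_single_one [DecidableEq ι]
    {F : Type*} [AddCommGroup F] [Module 𝕜 F] [TopologicalSpace F]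
    {L : (ι → 𝕜) →L[𝕜] F} (h : ∀ i, L (Pi.single i 1) = 0) : L = 0 :=
  coe_injective <| (Pi.basisFun 𝕜 ι).ext fun i => by simpa using h i

theorem HasFDerivAt.sum_mul_comp {p : ι → E → 𝕜} {Dp : ι → E →L[𝕜] 𝕜}
    {φ : (ι → 𝕜) → E} {Dφ : (ι → 𝕜) →L[𝕜] E} {c : ι → 𝕜}
    (hp : ∀ α, HasFDerivAt (p α) (Dp α) (φ c)) (hφ : HasFDerivAt φ Dφ c) :
    HasFDerivAt (fun c' => ∑ α, c' α * p α (φ c'))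
      (∑ α, p α (φ c) • proj α + (∑ α, c α • Dp α).comp Dφ) c := by
  rw [finsetSum_comp, ← Finset.sum_add_distrib]
  refine HasFDerivAt.fun_sum fun α _ => ?_
  rw [smul_comp, add_comm]
  exact (hasFDerivAt_apply α c).fun_mul ((hp α).comp c hφ)

theorem apply_eq_zero_of_sum_mul_comp_eq_zero {p : ι → E → 𝕜} {Dp : ι → E →L[𝕜] 𝕜}
    {φ : (ι → 𝕜) → E} {Dφ : (ι → 𝕜) →L[𝕜] E} {c : ι → 𝕜}
    (hp : ∀ α, HasFDerivAt (p α) (Dp α) (φ c)) (hφ : HasFDerivAt φ Dφ c)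
    (hW : ∀ c', ∑ α, c' α * p α (φ c') = 0) (hcrit : ∑ α, c α • Dp α = 0) (β : ι) :
    p β (φ c) = 0 := by
  classical
  have hD := (HasFDerivAt.sum_mul_comp hp hφ).unique
    ((hasFDerivAt_const (0 : 𝕜) c).congr_of_eventuallyEq (.of_forall hW))
  rw [hcrit, zero_comp, add_zero] at hD
  simpa [Pi.single_apply] using congr($hD (Pi.single β 1))

end

/-- If a SUSY vacuum with vanishing superpotential `W(c, φ) = ∑ α, c α * p α φ` persists
under arbitrary perturbations of the generic coefficients `c`, then every term of the
superpotential vanishes individually at the vacuum. -/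
theorem generic_terms_vanish (n m : ℕ)
    (p : Fin m → (Fin n → ℂ) → ℂ) (hp : ∀ α, Differentiable ℂ (p α))
    (φs : (Fin m → ℂ) → (Fin n → ℂ)) (hφs : Differentiable ℂ φs)
    (hW0 : ∀ c : Fin m → ℂ, ∑ α, c α * p α (φs c) = 0)
    (hdW : ∀ (c : Fin m → ℂ) (i : Fin n),
      ∑ α, c α * fderiv ℂ (p α) (φs c) (Pi.single i 1) = 0) :
    ∀ (c : Fin m → ℂ) (α : Fin m), p α (φs c) = 0 := by
  intro c
  have hcrit : ∑ α, c α • fderiv ℂ (p α) (φs c) = 0 :=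
    eq_zero_of_apply_single_one fun i => by simpa using hdW c i
  exact apply_eq_zero_of_sum_mul_comp_eq_zero (fun α => (hp α _).hasFDerivAt)
    (hφs c).hasFDerivAt hW0 hcrit
end
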